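/- arXiv:1409.5415 — 2 statements merged into one kernel-verified Lean document; each statement's English description precedes it below -/
import Mathlib

section
/- The improper integral ∫₀^∞ (a^4 + 1 - a^2 √(a^4+2)) da converges and 2^{1/2} π^{-3/4} ∫₀^∞ (a^4 + 1 - a^2 √(a^4+2)) da = (2/5)(2/π)^{1/4} Γ(3/4)/Γ(5/4). -/
open Real MeasureTheory Set Filter Topology

noncomputable def Gaux (x : ℝ) : ℝ :=
  (x^5 + 5*x - x^3*Real.sqrt (x^4+2) - 4*x^3/Real.sqrt (x^4+2))/5

noncomputable def φ (a : ℝ) : ℝ := a^4/(a^4+2)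

lemma base_pos (a : ℝ) : (0:ℝ) < a^4+2 := by positivity
lemma sqrt_pos' (a : ℝ) : 0 < Real.sqrt (a^4+2) := Real.sqrt_pos.mpr (base_pos a)
lemma sq_sqrt' (a : ℝ) : (Real.sqrt (a^4+2))^2 = a^4+2 := Real.sq_sqrt (base_pos a).le

lemma sqrt_ge (a : ℝ) : a^2 ≤ Real.sqrt (a^4+2) := by
  rw [show a^4+2 = a^2*a^2+2 by ring]
  nlinarith [Real.sq_sqrt (show (0:ℝ) ≤ a^2*a^2+2 by positivity),
    Real.sqrt_nonneg (a^2*a^2+2), sq_nonneg (Real.sqrt (a^2*a^2+2) - a^2)]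

lemma key_eq (a s : ℝ) (hspos : 0 < s) (hs2 : s^2 = a^4+2) :
    a^4 + 1 - a^2*s - 16/5*a^2/s^3 =
    (5*a^4 + 5 - (3*a^2*s + a^3*(4*a^3/(2*s))) - (4*(3*a^2)*s - 4*a^3*(4*a^3/(2*s)))/s^2)/5 := by
  have hsne : s ≠ 0 := hspos.ne'
  field_simp
  linear_combination (-4*a^2*s^2+16*a^2) * hs2

lemma hasDerivGaux (a : ℝ) :
    HasDerivAt Gaux
      (a^4 + 1 - a^2*Real.sqrt (a^4+2) - 16/5*a^2/(Real.sqrt (a^4+2))^3) a := by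
  have hspos := sqrt_pos' a
  have hs2 := sq_sqrt' a
  have hsne : Real.sqrt (a^4+2) ≠ 0 := hspos.ne'
  have hinner : HasDerivAt (fun x:ℝ => x^4+2) (4*a^3) a := by
    simpa using (hasDerivAt_pow 4 a).add_const 2
  have hsq : HasDerivAt (fun x => Real.sqrt (x^4+2))
      (4*a^3 / (2*Real.sqrt (a^4+2))) a := by
    have h := (Real.hasDerivAt_sqrt (base_pos a).ne').comp a hinner
    exact h.congr_deriv (by ring)
  have d1 : HasDerivAt (fun x:ℝ => x^5) (5*a^4) a := by simpa using hasDerivAt_pow 5 a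
  have d2 : HasDerivAt (fun x:ℝ => 5*x) 5 a := by simpa using (hasDerivAt_id a).const_mul (5:ℝ)
  have d3 : HasDerivAt (fun x:ℝ => x^3) (3*a^2) a := by simpa using hasDerivAt_pow 3 a
  have d4 : HasDerivAt (fun x:ℝ => x^3*Real.sqrt (x^4+2))
      (3*a^2*Real.sqrt (a^4+2) + a^3*(4*a^3/(2*Real.sqrt (a^4+2)))) a := d3.mul hsq
  have d5 : HasDerivAt (fun x:ℝ => 4*x^3) (4*(3*a^2)) a := d3.const_mul 4
  have d6 : HasDerivAt (fun x:ℝ => 4*x^3/Real.sqrt (x^4+2))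
      ((4*(3*a^2)*Real.sqrt (a^4+2) - 4*a^3*(4*a^3/(2*Real.sqrt (a^4+2))))/(Real.sqrt (a^4+2))^2) a :=
    d5.div hsq hsne
  have h := (((d1.add d2).sub d4).sub d6).div_const 5
  rw [key_eq a _ hspos hs2]
  exact h

lemma contF : Continuous (fun a : ℝ => a ^ 4 + 1 - a ^ 2 * Real.sqrt (a ^ 4 + 2)) := by
  fun_prop

lemma contH : Continuous (fun a : ℝ => 16/5*a^2/(Real.sqrt (a^4+2))^3) := by
  apply Continuous.div (by fun_prop) (by fun_prop)
  intro a
  exact pow_ne_zero _ (sqrt_pos' a).ne'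

lemma F_eq_sq (a : ℝ) : a ^ 4 + 1 - a ^ 2 * Real.sqrt (a ^ 4 + 2)
    = (1/2) * (Real.sqrt (a^4+2) - a^2)^2 := by
  linear_combination (-1/2) * _root_.sq_sqrt' a

lemma F_nonneg (a : ℝ) : 0 ≤ a ^ 4 + 1 - a ^ 2 * Real.sqrt (a ^ 4 + 2) := by
  rw [F_eq_sq]; positivity

lemma F_bound {a : ℝ} (ha : 1 ≤ a) :
    a ^ 4 + 1 - a ^ 2 * Real.sqrt (a ^ 4 + 2) ≤ a ^ (-4 : ℝ) := by
  have h1 : a ^ (-4:ℝ) = (a^4)⁻¹ := by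
    rw [show (-4:ℝ) = -(4:ℕ) by norm_num, Real.rpow_neg (by linarith), Real.rpow_natCast]
  have hs := sqrt_ge a
  have hs2 := sq_sqrt' a
  have ha2 : (1:ℝ) ≤ a^2 := one_le_pow₀ ha
  have key : Real.sqrt (a^4+2) - a^2 ≤ a^(-2:ℝ) := by
    have h2 : a ^ (-2:ℝ) = (a^2)⁻¹ := by
      rw [show (-2:ℝ) = -(2:ℕ) by norm_num, Real.rpow_neg (by linarith), Real.rpow_natCast]
    rw [h2]
    have hd : (Real.sqrt (a^4+2) - a^2) * (Real.sqrt (a^4+2) + a^2) = 2 := by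
      nlinarith [hs2]
    have hden : 2*a^2 ≤ Real.sqrt (a^4+2) + a^2 := by nlinarith
    have hinv : (0:ℝ) < a^2 := by nlinarith
    rw [show (a^2)⁻¹ = 1/a^2 by ring, le_div_iff₀ hinv]
    nlinarith [hs]
  calc a ^ 4 + 1 - a ^ 2 * Real.sqrt (a ^ 4 + 2)
      = (1/2)*(Real.sqrt (a^4+2) - a^2)^2 := F_eq_sq a
    _ ≤ (1/2)*(a^(-2:ℝ))^2 := by
        have h0 : 0 ≤ Real.sqrt (a^4+2) - a^2 := by linarith
        nlinarith [key]
    _ ≤ a^(-4:ℝ) := by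
        rw [← Real.rpow_natCast (a ^ (-2:ℝ)) 2, ← Real.rpow_mul (by linarith : (0:ℝ) ≤ a)]
        norm_num
        nlinarith [Real.rpow_pos_of_pos (show (0:ℝ)<a by linarith) (-4:ℝ)]

lemma intF : IntegrableOn (fun a : ℝ => a ^ 4 + 1 - a ^ 2 * Real.sqrt (a ^ 4 + 2)) (Ioi 0) := by
  rw [show Ioi (0:ℝ) = Ioc 0 1 ∪ Ioi 1 from (Ioc_union_Ioi_eq_Ioi (by norm_num)).symm]
  apply IntegrableOn.union
  · exact (contF.continuousOn.integrableOn_Icc).mono_set Ioc_subset_Icc_self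
  · apply Integrable.mono' (g := fun a : ℝ => a ^ (-4:ℝ))
      (integrableOn_Ioi_rpow_of_lt (by norm_num) (by norm_num))
      contF.aestronglyMeasurable.restrict
    filter_upwards [ae_restrict_mem measurableSet_Ioi] with a ha
    rw [Real.norm_eq_abs, abs_of_nonneg (F_nonneg a)]
    exact F_bound (le_of_lt ha)

lemma H_nonneg (a : ℝ) : 0 ≤ 16/5*a^2/(Real.sqrt (a^4+2))^3 := by positivity

lemma H_bound {a : ℝ} (ha : 1 ≤ a) : 16/5*a^2/(Real.sqrt (a^4+2))^3 ≤ 4 * a ^ (-4:ℝ) := by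
  have h1 : a ^ (-4:ℝ) = (a^4)⁻¹ := by
    rw [show (-4:ℝ) = -(4:ℕ) by norm_num, Real.rpow_neg (by linarith), Real.rpow_natCast]
  have hs := sqrt_ge a
  have ha2 : (1:ℝ) ≤ a^2 := one_le_pow₀ ha
  have hcube : a^6 ≤ (Real.sqrt (a^4+2))^3 := by
    calc a^6 = (a^2)^3 := by ring
    _ ≤ (Real.sqrt (a^4+2))^3 := by
        apply pow_le_pow_left₀ (by positivity) hs
  rw [h1, div_le_iff₀ (by positivity)]
  have h6 : (0:ℝ) < a^6 := by positivity
  have hid : 4 * (a^4)⁻¹ * a^6 = 4 * a^2 := by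
    field_simp
  calc 16/5*a^2 ≤ 4 * (a^4)⁻¹ * a^6 := by
        rw [hid]; nlinarith
    _ ≤ 4 * (a^4)⁻¹ * (Real.sqrt (a^4+2))^3 := by
        apply mul_le_mul_of_nonneg_left hcube (by positivity)

lemma intH : IntegrableOn (fun a : ℝ => 16/5*a^2/(Real.sqrt (a^4+2))^3) (Ioi 0) := by
  rw [show Ioi (0:ℝ) = Ioc 0 1 ∪ Ioi 1 from (Ioc_union_Ioi_eq_Ioi (by norm_num)).symm]
  apply IntegrableOn.union
  · exact (contH.continuousOn.integrableOn_Icc).mono_set Ioc_subset_Icc_self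
  · apply Integrable.mono' (g := fun a : ℝ => 4 * a ^ (-4:ℝ))
      ((integrableOn_Ioi_rpow_of_lt (by norm_num) (by norm_num)).const_mul 4)
      contH.aestronglyMeasurable.restrict
    filter_upwards [ae_restrict_mem measurableSet_Ioi] with a ha
    rw [Real.norm_eq_abs, abs_of_nonneg (H_nonneg a)]
    exact H_bound (le_of_lt ha)

lemma D_pos (a : ℝ) : 0 < (a^4+5)*Real.sqrt (a^4+2) + a^6+6*a^2 := by
  have := sqrt_pos' a
  nlinarith [sq_nonneg a, sq_nonneg (a^3), pow_two_nonneg (a^2)]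

lemma Gaux_eq (a : ℝ) : Gaux a =
    a*(9*a^4+50) / (5 * Real.sqrt (a^4+2) * ((a^4+5)*Real.sqrt (a^4+2) + a^6+6*a^2)) := by
  have hspos := sqrt_pos' a
  have hs2 := sq_sqrt' a
  have hDpos := D_pos a
  have hsne : Real.sqrt (a^4+2) ≠ 0 := hspos.ne'
  have hDne : (a^4+5)*Real.sqrt (a^4+2) + a^6+6*a^2 ≠ 0 := hDpos.ne'
  unfold Gaux
  field_simp
  linear_combination (-5*a^3*Real.sqrt (a^4+2) - a^7*Real.sqrt (a^4+2) + 25*a + 4*a^5) * hs2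

lemma Gaux_nonneg {a : ℝ} (ha : 0 ≤ a) : 0 ≤ Gaux a := by
  rw [Gaux_eq]
  apply div_nonneg (by positivity)
  positivity

lemma Gaux_bound {a : ℝ} (ha : 1 ≤ a) : Gaux a ≤ 12 * a ^ (-3:ℝ) := by
  have ha0 : (0:ℝ) < a := by linarith
  have h3 : a ^ (-3:ℝ) = (a^3)⁻¹ := by
    rw [show (-3:ℝ) = -(3:ℕ) by norm_num, Real.rpow_neg ha0.le, Real.rpow_natCast]
  rw [Gaux_eq, h3]
  have hs := sqrt_ge a
  have hspos := sqrt_pos' a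
  have hDpos := D_pos a
  have ha2 : (1:ℝ) ≤ a^2 := one_le_pow₀ ha
  have hden : 5 * a^8 ≤ 5 * Real.sqrt (a^4+2) * ((a^4+5)*Real.sqrt (a^4+2) + a^6+6*a^2) := by
    have h1 : a^2 * (a^4 * a^2) ≤ Real.sqrt (a^4+2) * ((a^4+5)*Real.sqrt (a^4+2) + a^6+6*a^2) := by
      apply mul_le_mul hs _ (by positivity) hspos.le
      nlinarith [hs, sq_nonneg a]
    nlinarith [h1]
  rw [div_le_iff₀ (by positivity)]
  have hnum : a*(9*a^4+50) ≤ 59 * a^5 := by nlinarith [one_le_pow₀ (n:=4) ha, ha0]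
  calc a*(9*a^4+50) ≤ 59*a^5 := hnum
    _ = 12 * (a^3)⁻¹ * (5*a^8) - a^5 := by field_simp; ring
    _ ≤ 12 * (a^3)⁻¹ * (5 * Real.sqrt (a^4+2) * ((a^4+5)*Real.sqrt (a^4+2) + a^6+6*a^2)) := by
        have := mul_le_mul_of_nonneg_left hden (by positivity : (0:ℝ) ≤ 12 * (a^3)⁻¹)
        nlinarith [pow_pos ha0 5]

lemma Gaux_tendsto : Tendsto Gaux atTop (𝓝 0) := by
  have h12 : Tendsto (fun a : ℝ => 12 * a ^ (-3:ℝ)) atTop (𝓝 0) := by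
    have := (tendsto_rpow_neg_atTop (show (0:ℝ) < 3 by norm_num)).const_mul (12:ℝ)
    simpa using this
  apply tendsto_of_tendsto_of_tendsto_of_le_of_le' tendsto_const_nhds h12
  · filter_upwards [eventually_ge_atTop (1:ℝ)] with a ha
    exact Gaux_nonneg (by linarith)
  · filter_upwards [eventually_ge_atTop (1:ℝ)] with a ha
    exact Gaux_bound ha

lemma Gaux_zero : Gaux 0 = 0 := by
  simp [Gaux]

lemma intF_eq : ∫ a in Ioi (0:ℝ), (a ^ 4 + 1 - a ^ 2 * Real.sqrt (a ^ 4 + 2))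
    = 16/5 * ∫ a in Ioi (0:ℝ), a^2/(Real.sqrt (a^4+2))^3 := by
  have hFTC : ∫ a in Ioi (0:ℝ),
      ((a ^ 4 + 1 - a ^ 2 * Real.sqrt (a ^ 4 + 2)) - 16/5*a^2/(Real.sqrt (a^4+2))^3)
      = 0 - Gaux 0 :=
    integral_Ioi_of_hasDerivAt_of_tendsto' (fun x _ => hasDerivGaux x)
      (intF.sub intH) Gaux_tendsto
  rw [Gaux_zero, sub_zero] at hFTC
  rw [integral_sub intF intH] at hFTC
  have h16 : ∫ a in Ioi (0:ℝ), 16/5*a^2/(Real.sqrt (a^4+2))^3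
      = 16/5 * ∫ a in Ioi (0:ℝ), a^2/(Real.sqrt (a^4+2))^3 := by
    rw [← integral_const_mul]
    congr 1
    ext a
    ring
  rw [← h16]
  linarith [hFTC]
lemma betaReal : ∫ t in Ioo (0:ℝ) 1, t^(-(1/4):ℝ) * (1-t)^(-(1/4):ℝ)
    = Real.Gamma (3/4) ^ 2 / Real.Gamma (3/2) := by
  have hre : (0:ℝ) < (Complex.ofReal (3/4)).re := by norm_num
  have h := Complex.Gamma_mul_Gamma_eq_betaIntegral (s := (3/4:ℂ)) (t := (3/4:ℂ))
    (by norm_num) (by norm_num)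
  have hbeta : Complex.betaIntegral (3/4) (3/4)
      = ((∫ t in Ioo (0:ℝ) 1, t^(-(1/4):ℝ) * (1-t)^(-(1/4):ℝ) : ℝ) : ℂ) := by
    rw [Complex.betaIntegral]
    have hcong : ∀ x ∈ Set.uIcc (0:ℝ) 1,
        (x:ℂ) ^ ((3/4:ℂ)-1) * (1-(x:ℂ)) ^ ((3/4:ℂ)-1)
          = (((x^(-(1/4):ℝ) * (1-x)^(-(1/4):ℝ) : ℝ)) : ℂ) := by
      intro x hx
      rw [Set.uIcc_of_le (by norm_num : (0:ℝ) ≤ 1)] at hx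
      obtain ⟨hx0, hx1⟩ := hx
      have h1 := Complex.ofReal_cpow hx0 (-(1/4):ℝ)
      have h2 := Complex.ofReal_cpow (show (0:ℝ) ≤ 1 - x by linarith) (-(1/4):ℝ)
      push_cast
      rw [h1, h2]
      norm_num
    rw [intervalIntegral.integral_congr hcong, intervalIntegral.integral_ofReal]
    congr 1
    rw [intervalIntegral.integral_of_le (by norm_num : (0:ℝ) ≤ 1),
      MeasureTheory.integral_Ioc_eq_integral_Ioo]
  rw [hbeta] at h
  have hA : Complex.Gamma (3/4) = ((Real.Gamma (3/4) : ℝ) : ℂ) := by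
    rw [show (3/4:ℂ) = ((3/4:ℝ):ℂ) by norm_num, Complex.Gamma_ofReal]
  have hB : Complex.Gamma (3/4 + 3/4) = ((Real.Gamma (3/2) : ℝ) : ℂ) := by
    rw [show (3/4+3/4:ℂ) = ((3/2:ℝ):ℂ) by norm_num, Complex.Gamma_ofReal]
  rw [hA, hB] at h
  have h' : ((Real.Gamma (3/4) * Real.Gamma (3/4) : ℝ) : ℂ)
      = ((Real.Gamma (3/2) * (∫ t in Ioo (0:ℝ) 1, t^(-(1/4):ℝ) * (1-t)^(-(1/4):ℝ)) : ℝ) : ℂ) := by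
    push_cast
    exact h
  have hr := Complex.ofReal_injective h'
  have hΓ : Real.Gamma (3/2) ≠ 0 := (Real.Gamma_pos_of_pos (by norm_num)).ne'
  rw [eq_div_iff hΓ]
  linear_combination -hr

lemma φ_deriv (a : ℝ) : HasDerivAt φ (8*a^3/(a^4+2)^2) a := by
  have h1 : HasDerivAt (fun x:ℝ => x^4) (4*a^3) a := by simpa using hasDerivAt_pow 4 a
  have h2 : HasDerivAt (fun x:ℝ => x^4+2) (4*a^3) a := h1.add_const 2
  have := h1.div h2 (base_pos a).ne'
  exact this.congr_deriv (by ring)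

lemma φ_inj : InjOn φ (Ioi 0) := by
  intro a ha b hb hab
  simp only [mem_Ioi] at ha hb
  unfold φ at hab
  have h1 : a^4*(b^4+2) = b^4*(a^4+2) := by
    field_simp at hab
    linarith [hab]
  have h4 : a^4 = b^4 := by nlinarith
  by_contra hne
  rcases lt_or_gt_of_ne hne with h | h
  · nlinarith [pow_lt_pow_left₀ h ha.le (n := 4) (by norm_num)]
  · nlinarith [pow_lt_pow_left₀ h hb.le (n := 4) (by norm_num)]

lemma φ_image : φ '' (Ioi 0) = Ioo 0 1 := by
  apply Subset.antisymm
  · rintro _ ⟨a, ha, rfl⟩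
    simp only [mem_Ioi] at ha
    unfold φ
    constructor
    · apply div_pos (by positivity) (base_pos a)
    · rw [div_lt_one (base_pos a)]; linarith
  · rintro t ⟨ht0, ht1⟩
    set a := (2*t/(1-t)) ^ ((1:ℝ)/4) with ha_def
    have hq : 0 < 2*t/(1-t) := div_pos (by linarith) (by linarith)
    have hapos : 0 < a := Real.rpow_pos_of_pos hq _
    have ha4 : a^4 = 2*t/(1-t) := by
      rw [ha_def, ← Real.rpow_natCast ((2*t/(1-t)) ^ ((1:ℝ)/4)) 4, ← Real.rpow_mul hq.le]
      norm_num
    refine ⟨a, hapos, ?_⟩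
    unfold φ
    rw [ha4]
    have h1t : (1:ℝ) - t ≠ 0 := by linarith
    field_simp
    ring

lemma pointwiseCOV (a : ℝ) (ha : 0 < a) :
    |8*a^3/(a^4+2)^2| * ((φ a)^(-(1/4):ℝ) * (1-φ a)^(-(1/4):ℝ))
      = (8 * 2^(-(1/4):ℝ)) * (a^2/(Real.sqrt (a^4+2))^3) := by
  have hb := base_pos a
  set u := (a^4+2)^((1:ℝ)/4) with hu
  have hupos : 0 < u := Real.rpow_pos_of_pos hb _
  have hu4 : u^4 = a^4+2 := by
    rw [hu, ← Real.rpow_natCast ((a^4+2)^((1:ℝ)/4)) 4, ← Real.rpow_mul hb.le]; norm_num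
  have huinv : (a^4+2)^(-(1/4):ℝ) = u⁻¹ := by
    rw [show (-(1/4):ℝ) = -(1/4) by norm_num, Real.rpow_neg hb.le, hu]
  have hsqrt : Real.sqrt (a^4+2) = u^2 := by
    rw [hu, ← Real.rpow_natCast ((a^4+2)^((1:ℝ)/4)) 2, ← Real.rpow_mul hb.le,
      Real.sqrt_eq_rpow]; norm_num
  have habs : |8*a^3/(a^4+2)^2| = 8*a^3/(a^4+2)^2 := abs_of_pos (by positivity)
  have hφr : (φ a)^(-(1/4):ℝ) = u/a := by
    show (a^4/(a^4+2))^(-(1/4):ℝ) = u/a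
    rw [Real.div_rpow (by positivity) hb.le, huinv]
    rw [← Real.rpow_natCast a 4, ← Real.rpow_mul ha.le]
    norm_num
    rw [Real.rpow_neg ha.le, Real.rpow_one]
    field_simp
  have h1φ : 1 - φ a = 2/(a^4+2) := by
    show 1 - a^4/(a^4+2) = 2/(a^4+2)
    field_simp
    ring
  have h1φr : (1-φ a)^(-(1/4):ℝ) = 2^(-(1/4):ℝ) * u := by
    rw [h1φ, Real.div_rpow (by norm_num) hb.le, huinv]
    field_simp
  rw [habs, hφr, h1φr, hsqrt, ← hu4]
  have hane : a ≠ 0 := ha.ne'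
  have hune : u ≠ 0 := hupos.ne'
  field_simp

lemma Jval : ∫ a in Ioi (0:ℝ), a^2/(Real.sqrt (a^4+2))^3
    = 2^((1:ℝ)/4)/8 * (Real.Gamma (3/4)^2/Real.Gamma (3/2)) := by
  have cov : ∫ t in Ioo (0:ℝ) 1, t^(-(1/4):ℝ) * (1-t)^(-(1/4):ℝ)
      = ∫ a in Ioi (0:ℝ), |8*a^3/(a^4+2)^2| • ((φ a)^(-(1/4):ℝ) * (1-φ a)^(-(1/4):ℝ)) := by
    rw [← φ_image]
    exact integral_image_eq_integral_abs_deriv_smul measurableSet_Ioi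
      (fun x _ => (φ_deriv x).hasDerivWithinAt) φ_inj _
  have hpt : ∫ a in Ioi (0:ℝ), |8*a^3/(a^4+2)^2| • ((φ a)^(-(1/4):ℝ) * (1-φ a)^(-(1/4):ℝ))
      = ∫ a in Ioi (0:ℝ), (8 * 2^(-(1/4):ℝ)) * (a^2/(Real.sqrt (a^4+2))^3) := by
    apply setIntegral_congr_fun measurableSet_Ioi
    intro a ha
    simp only [smul_eq_mul]
    exact pointwiseCOV a ha
  have key : Real.Gamma (3/4)^2/Real.Gamma (3/2)
      = (8 * 2^(-(1/4):ℝ)) * ∫ a in Ioi (0:ℝ), a^2/(Real.sqrt (a^4+2))^3 := by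
    rw [← betaReal, cov, hpt, integral_const_mul]
  have hone : (2:ℝ)^((1:ℝ)/4)/8 * (8 * 2^(-(1/4):ℝ)) = 1 := by
    have h : (2:ℝ)^((1:ℝ)/4)/8 * (8 * 2^(-(1/4):ℝ)) = 2^((1:ℝ)/4) * 2^(-(1/4):ℝ) := by ring
    rw [h, ← Real.rpow_add (by norm_num : (0:ℝ) < 2)]
    norm_num
  rw [key, ← mul_assoc, hone, one_mul]

/-- The Foldy-type integral `∫₀^∞ (a⁴ + 1 - a² √(a⁴+2)) da` converges and
`2^{1/2} π^{-3/4} ∫₀^∞ (a⁴ + 1 - a² √(a⁴+2)) da = (2/5)(2/π)^{1/4} Γ(3/4)/Γ(5/4)`. -/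
theorem stmt_1 :
    IntegrableOn (fun a : ℝ => a ^ 4 + 1 - a ^ 2 * Real.sqrt (a ^ 4 + 2)) (Ioi 0) ∧
    (2 : ℝ) ^ ((1 : ℝ) / 2) * Real.pi ^ (-(3 : ℝ) / 4) *
        (∫ a in Ioi (0 : ℝ), (a ^ 4 + 1 - a ^ 2 * Real.sqrt (a ^ 4 + 2))) =
      (2 / 5) * (2 / Real.pi) ^ ((1 : ℝ) / 4) *
        (Real.Gamma (3 / 4) / Real.Gamma (5 / 4)) := by
  refine ⟨intF, ?_⟩
  rw [intF_eq, Jval]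
  have hπ := Real.pi_pos
  set A := Real.Gamma (3/4) with hAdef
  have hA : 0 < A := Real.Gamma_pos_of_pos (by norm_num)
  have hG32 : Real.Gamma (3/2) = Real.sqrt π / 2 := by
    rw [show (3/2:ℝ) = 1/2 + 1 by norm_num, Real.Gamma_add_one (by norm_num),
      Real.Gamma_one_half_eq]
    ring
  have hG54 : Real.Gamma (5/4) = Real.Gamma (1/4) / 4 := by
    rw [show (5/4:ℝ) = 1/4 + 1 by norm_num, Real.Gamma_add_one (by norm_num)]
    ring
  have hsqrt2 : Real.sqrt 2 * Real.sqrt 2 = 2 := Real.mul_self_sqrt (by norm_num)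
  have hs2ne : Real.sqrt 2 ≠ 0 := by positivity
  have hrefl : Real.Gamma (1/4) * A = π * Real.sqrt 2 := by
    have h := Real.Gamma_mul_Gamma_one_sub (1/4)
    rw [show (1:ℝ) - 1/4 = 3/4 by norm_num] at h
    rw [show π * (1/4) = π/4 by ring, Real.sin_pi_div_four] at h
    rw [← hAdef] at h
    rw [h]
    field_simp
    linear_combination (-1) * hsqrt2
  set x := (2:ℝ) ^ ((1:ℝ)/4) with hxdef
  set y := π ^ ((1:ℝ)/4) with hydef
  have hx0 : 0 < x := Real.rpow_pos_of_pos (by norm_num) _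
  have hy0 : 0 < y := Real.rpow_pos_of_pos hπ _
  have hx4 : x^4 = 2 := by
    rw [hxdef, ← Real.rpow_natCast ((2:ℝ) ^ ((1:ℝ)/4)) 4,
      ← Real.rpow_mul (by norm_num : (0:ℝ) ≤ 2)]
    norm_num
  have hy4 : y^4 = π := by
    rw [hydef, ← Real.rpow_natCast (π ^ ((1:ℝ)/4)) 4, ← Real.rpow_mul hπ.le]
    norm_num
  have h2half : (2:ℝ) ^ ((1:ℝ)/2) = x^2 := by
    rw [hxdef, ← Real.rpow_natCast ((2:ℝ) ^ ((1:ℝ)/4)) 2,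
      ← Real.rpow_mul (by norm_num : (0:ℝ) ≤ 2)]
    norm_num
  have hπ34 : π ^ (-(3:ℝ)/4) = (y^3)⁻¹ := by
    rw [show (-(3:ℝ)/4) = -((3:ℝ)/4) by norm_num, Real.rpow_neg hπ.le]
    congr 1
    rw [hydef, ← Real.rpow_natCast (π ^ ((1:ℝ)/4)) 3, ← Real.rpow_mul hπ.le]
    norm_num
  have hdiv : ((2:ℝ)/π) ^ ((1:ℝ)/4) = x/y := by
    rw [Real.div_rpow (by norm_num) hπ.le]
  have hsq2x : Real.sqrt 2 = x^2 := by
    rw [Real.sqrt_eq_rpow, hxdef, ← Real.rpow_natCast ((2:ℝ) ^ ((1:ℝ)/4)) 2,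
      ← Real.rpow_mul (by norm_num : (0:ℝ) ≤ 2)]
    norm_num
  have hsqπy : Real.sqrt π = y^2 := by
    rw [Real.sqrt_eq_rpow, hydef, ← Real.rpow_natCast (π ^ ((1:ℝ)/4)) 2,
      ← Real.rpow_mul hπ.le]
    norm_num
  have hG14 : Real.Gamma (1/4) = π * x^2 / A := by
    rw [eq_div_iff hA.ne']
    rw [hsq2x] at hrefl
    linarith [hrefl]
  rw [h2half, hπ34, hdiv, hG32, hsqπy, hG54, hG14, ← hy4]
  field_simp
  linear_combination 16 * hx4
end

section
/- Let (a_m)_{m≥0} be nonnegative numbers with ∑ a_m = 1, let μ = ∑ m a_m, S = ∑ m² a_m and V = S - μ². Then for every M > 0, ∑_{m > μ + M} m^{7/5} a_m ≤ M^{-3/5} S^{7/10} V^{3/10}. -/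
/-!
On the tail `m > μ + M` one has `1 ≤ M^{-3/5} |m - μ|^{3/5}`, so the tail sum is at most
`M^{-3/5} ∑ m^{7/5} |m - μ|^{3/5} a_m`. Hölder's inequality for the weights `a_m` with exponents
`10/7` and `10/3` bounds this sum by `(∑ m² a_m)^{7/10} (∑ (m - μ)² a_m)^{3/10} = S^{7/10} V^{3/10}`.
-/

open Real

theorem summable_and_weighted_inner_le_Lp_mul_Lq_tsum_of_nonneg {ι : Type*} {p q : ℝ} (hpq : p.HolderConjugate q)
    {u v a : ι → ℝ} (hu : ∀ i, 0 ≤ u i) (hv : ∀ i, 0 ≤ v i) (ha : ∀ i, 0 ≤ a i)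
    (hu_sum : Summable fun i => u i ^ p * a i) (hv_sum : Summable fun i => v i ^ q * a i) :
    (Summable fun i => u i * v i * a i) ∧
      ∑' i, u i * v i * a i ≤
        (∑' i, u i ^ p * a i) ^ (1 / p) * (∑' i, v i ^ q * a i) ^ (1 / q) := by
  have rpow_weight : ∀ {r : ℝ} {w : ι → ℝ}, r ≠ 0 → (∀ i, 0 ≤ w i) → ∀ i,
      (w i * a i ^ (1 / r)) ^ r = w i ^ r * a i := fun hr hw i => by
    rw [mul_rpow (hw i) (rpow_nonneg (ha i) _), ← rpow_mul (ha i), one_div_mul_cancel hr, rpow_one]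
  have weights_mul : ∀ i, u i * a i ^ (1 / p) * (v i * a i ^ (1 / q)) = u i * v i * a i := by
    intro i
    rw [mul_mul_mul_comm, ← rpow_add' (ha i) (by simp [hpq.inv_add_inv_eq_one]), one_div, one_div,
      hpq.inv_add_inv_eq_one, rpow_one]
  have := summable_and_inner_le_Lp_mul_Lq_tsum_of_nonneg hpq
    (fun i => mul_nonneg (hu i) (rpow_nonneg (ha i) (1 / p)))
    (fun i => mul_nonneg (hv i) (rpow_nonneg (ha i) (1 / q)))
    (by simpa only [rpow_weight hpq.ne_zero hu] using hu_sum)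
    (by simpa only [rpow_weight hpq.symm.ne_zero hv] using hv_sum)
  simpa only [weights_mul, rpow_weight hpq.ne_zero hu, rpow_weight hpq.symm.ne_zero hv] using this

theorem summable_sq_sub_mul {ι : Type*} {x a : ι → ℝ} (ha : Summable a)
    (hx : Summable fun i => x i * a i) (hx2 : Summable fun i => x i ^ 2 * a i) (c : ℝ) :
    Summable fun i => (x i - c) ^ 2 * a i :=
  ((hx2.sub (hx.mul_left (2 * c))).add (ha.mul_left (c ^ 2))).congr fun i => by ring

theorem tsum_sq_sub_mean_mul {ι : Type*} {x a : ι → ℝ} (ha : Summable a) (ha_one : ∑' i, a i = 1)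
    (hx : Summable fun i => x i * a i) (hx2 : Summable fun i => x i ^ 2 * a i) :
    ∑' i, (x i - ∑' j, x j * a j) ^ 2 * a i = ∑' i, x i ^ 2 * a i - (∑' i, x i * a i) ^ 2 := by
  set μ := ∑' j, x j * a j
  have expand : (fun i => (x i - μ) ^ 2 * a i) =
      fun i => x i ^ 2 * a i - 2 * μ * (x i * a i) + μ ^ 2 * a i := by
    funext i; ring
  rw [expand, (hx2.sub (hx.mul_left _)).tsum_add (ha.mul_left _), hx2.tsum_sub (hx.mul_left _),
    tsum_mul_left, tsum_mul_left, ha_one]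
  ring

theorem ite_le_rpow_neg_mul_abs_rpow {x μ M w r : ℝ} (hM : 0 < M) (hw : 0 ≤ w) (hr : 0 ≤ r) :
    (if μ + M < x then w else 0) ≤ M ^ (-r) * (w * |x - μ| ^ r) := by
  split_ifs with h
  · have hMx : M ^ r ≤ |x - μ| ^ r :=
      rpow_le_rpow hM.le (by rw [abs_of_pos (by linarith)]; linarith) hr
    rw [rpow_neg hM.le, mul_left_comm]
    refine le_mul_of_one_le_right hw ?_
    rw [← div_eq_inv_mul, one_le_div (rpow_pos_of_pos hM r)]
    exact hMx
  · positivity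

theorem stmt_12_general (a : ℕ → ℝ) (ha_nonneg : ∀ m, 0 ≤ a m)
    (ha_sum : Summable a) (ha_total : ∑' m, a m = 1)
    (hμ : Summable fun m : ℕ => (m : ℝ) * a m)
    (hS : Summable fun m : ℕ => (m : ℝ) ^ 2 * a m)
    (μ S V : ℝ)
    (hμdef : μ = ∑' m : ℕ, (m : ℝ) * a m)
    (hSdef : S = ∑' m : ℕ, (m : ℝ) ^ 2 * a m)
    (hVdef : V = S - μ ^ 2)
    (M : ℝ) (hM : 0 < M) :
    (∑' m : ℕ, if μ + M < (m : ℝ) then (m : ℝ) ^ ((7 : ℝ) / 5) * a m else 0)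
      ≤ M ^ (-(3 : ℝ) / 5) * S ^ ((7 : ℝ) / 10) * V ^ ((3 : ℝ) / 10) := by
  have hV : V = ∑' m : ℕ, ((m : ℝ) - μ) ^ 2 * a m := by
    rw [hVdef, hSdef, hμdef, tsum_sq_sub_mean_mul ha_sum ha_total hμ hS]
  have hpow_m : ∀ m : ℕ, ((m : ℝ) ^ ((7 : ℝ) / 5)) ^ ((10 : ℝ) / 7) = (m : ℝ) ^ 2 := fun m => by
    rw [← rpow_mul m.cast_nonneg]; norm_num
  have hpow_dev : ∀ m : ℕ, (|(m : ℝ) - μ| ^ ((3 : ℝ) / 5)) ^ ((10 : ℝ) / 3) = ((m : ℝ) - μ) ^ 2 :=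
    fun m => by rw [← rpow_mul (abs_nonneg _)]; norm_num
  obtain ⟨hsum, hholder⟩ := summable_and_weighted_inner_le_Lp_mul_Lq_tsum_of_nonneg (p := 10 / 7) (q := 10 / 3)
    (Real.holderConjugate_iff.mpr ⟨by norm_num, by norm_num⟩)
    (fun m : ℕ => rpow_nonneg m.cast_nonneg ((7 : ℝ) / 5))
    (fun m => rpow_nonneg (abs_nonneg ((m : ℝ) - μ)) ((3 : ℝ) / 5)) ha_nonneg
    (by simpa only [hpow_m] using hS)
    (by simpa only [hpow_dev] using summable_sq_sub_mul ha_sum hμ hS μ)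
  simp only [hpow_m, hpow_dev, ← hSdef, ← hV] at hholder
  have htail : ∀ m : ℕ, (if μ + M < (m : ℝ) then (m : ℝ) ^ ((7 : ℝ) / 5) * a m else 0) ≤
      M ^ (-(3 / 5 : ℝ)) * ((m : ℝ) ^ ((7 : ℝ) / 5) * |(m : ℝ) - μ| ^ ((3 : ℝ) / 5) * a m) :=
    fun m => (ite_le_rpow_neg_mul_abs_rpow (r := 3 / 5) hM
      (mul_nonneg (rpow_nonneg m.cast_nonneg _) (ha_nonneg m)) (by norm_num)).trans_eq (by ring)
  have htail_nonneg : ∀ m : ℕ,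
      0 ≤ if μ + M < (m : ℝ) then (m : ℝ) ^ ((7 : ℝ) / 5) * a m else 0 := fun m => by
    have := ha_nonneg m
    split_ifs <;> positivity
  rw [neg_div, mul_assoc]
  calc _ ≤ ∑' m : ℕ, M ^ (-(3 / 5 : ℝ)) *
          ((m : ℝ) ^ ((7 : ℝ) / 5) * |(m : ℝ) - μ| ^ ((3 : ℝ) / 5) * a m) :=
        Summable.tsum_le_tsum htail (.of_nonneg_of_le htail_nonneg htail (hsum.mul_left _))
          (hsum.mul_left _)
    _ ≤ _ := by
      rw [tsum_mul_left]
      gcongr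
      exact hholder.trans_eq (by norm_num)

/-- Hölder tail estimate for particle number distributions: if `a_m ≥ 0`,
`∑ a_m = 1`, `μ = ∑ m a_m`, `S = ∑ m² a_m` and `V = S - μ²`, then for every
`M > 0`, `∑_{m > μ+M} m^{7/5} a_m ≤ M^{-3/5} S^{7/10} V^{3/10}`. -/
theorem stmt_12 (a : ℕ → ℝ) (ha_nonneg : ∀ m, 0 ≤ a m)
    (ha_sum : Summable a) (ha_total : ∑' m, a m = 1)
    (hμ : Summable fun m : ℕ => (m : ℝ) * a m)
    (hS : Summable fun m : ℕ => (m : ℝ) ^ 2 * a m)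
    (h75 : Summable fun m : ℕ => (m : ℝ) ^ ((7 : ℝ) / 5) * a m)
    (μ S V : ℝ)
    (hμdef : μ = ∑' m : ℕ, (m : ℝ) * a m)
    (hSdef : S = ∑' m : ℕ, (m : ℝ) ^ 2 * a m)
    (hVdef : V = S - μ ^ 2)
    (M : ℝ) (hM : 0 < M) :
    (∑' m : ℕ, if μ + M < (m : ℝ) then (m : ℝ) ^ ((7 : ℝ) / 5) * a m else 0)
      ≤ M ^ (-(3 : ℝ) / 5) * S ^ ((7 : ℝ) / 10) * V ^ ((3 : ℝ) / 10) :=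
  stmt_12_general a ha_nonneg ha_sum ha_total hμ hS μ S V hμdef hSdef hVdef M hM
end
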